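/- Let F be a CNF formula and suppose var(F) is partitioned into X_1 and X_2, and fix subsets of clauses defining F_v = F_{𝒞̄,X} etc. as in a node of a branch decomposition with children c_1, c_2. Then PS(F_v) = { (C_1 ∪ C_2) ∩ cla(F_v) : C_1 ∈ PS(F_{c_1}), C_2 ∈ PS(F_{c_2}) }, where clause sets are identified with the underlying original clauses of F. -/

import Mathlib

/-- A clause is a finite set of literals; a literal is a variable paired with a polarity. -/
def occursIn {V : Type*} (x : V) (C : Finset (V × Bool)) : Prop := ∃ b, (x, b) ∈ C

/-- An assignment `τ` satisfies the clause `C` restricted to the variable set `X`. -/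
def satisfiesOn {V : Type*} (τ : V → Bool) (C : Finset (V × Bool)) (X : Set V) : Prop :=
  ∃ l ∈ C, l.1 ∈ X ∧ τ l.1 = l.2

/-- The set of (indices of) clauses of the subformula `F_{D,X}` satisfied by `τ`. -/
def satA {V ι : Type*} (F : ι → Finset (V × Bool)) (τ : V → Bool) (D : Set ι) (X : Set V) :
    Set ι := {i | i ∈ D ∧ satisfiesOn τ (F i) X}

/-- Precisely satisfiable clause-sets of the subformula `F_{D,X}`. -/
def PSA {V ι : Type*} (F : ι → Finset (V × Bool)) (D : Set ι) (X : Set V) : Set (Set ι) :=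
  {s | ∃ τ : V → Bool, satA F τ D X = s}

/-- Clauses of `F` satisfied by the complete assignment `τ`. -/
def satF {V ι : Type*} (F : ι → Finset (V × Bool)) (τ : V → Bool) : Set ι :=
  satA F τ Set.univ Set.univ

/-- The family of precisely satisfiable clause-sets of `F`. -/
def PS {V ι : Type*} (F : ι → Finset (V × Bool)) : Set (Set ι) := PSA F Set.univ Set.univ

/-- The incidence graph of a CNF formula. -/
def incidence {V ι : Type*} (F : ι → Finset (V × Bool)) : SimpleGraph (ι ⊕ V) where
  Adj a b := (∃ i x, a = Sum.inl i ∧ b = Sum.inr x ∧ occursIn x (F i)) ∨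
             (∃ i x, b = Sum.inl i ∧ a = Sum.inr x ∧ occursIn x (F i))
  symm := ⟨by
    rintro a b (⟨i, x, h1, h2, h3⟩ | ⟨i, x, h1, h2, h3⟩)
    · exact Or.inr ⟨i, x, h1, h2, h3⟩
    · exact Or.inl ⟨i, x, h1, h2, h3⟩⟩
  loopless := ⟨by rintro a (⟨i, x, h1, h2, _⟩ | ⟨i, x, h1, h2, _⟩) <;> simp_all⟩

/-- The bigraph bipartization `G[A, Ā]`: keep only edges with exactly one endpoint in `A`. -/
def bipartize {α : Type*} (G : SimpleGraph α) (A : Set α) : SimpleGraph α where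
  Adj a b := G.Adj a b ∧ ((a ∈ A ∧ b ∉ A) ∨ (b ∈ A ∧ a ∉ A))
  symm := ⟨by intro a b h; exact ⟨h.1.symm, h.2.symm⟩⟩
  loopless := ⟨by intro a h; exact G.ne_of_adj h.1 rfl⟩

/-- `M` is an induced matching of the graph `G` (edges recorded as ordered pairs). -/
def IsIM {α : Type*} (G : SimpleGraph α) (M : Finset (α × α)) : Prop :=
  (∀ p ∈ M, G.Adj p.1 p.2) ∧
  ∀ p ∈ M, ∀ q ∈ M, p ≠ q →
    p.1 ≠ q.1 ∧ p.1 ≠ q.2 ∧ p.2 ≠ q.1 ∧ p.2 ≠ q.2 ∧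
    ¬ G.Adj p.1 q.1 ∧ ¬ G.Adj p.1 q.2 ∧ ¬ G.Adj p.2 q.1 ∧ ¬ G.Adj p.2 q.2

/-- Rooted binary trees with leaves labelled by `α`. -/
inductive BTree (α : Type u) : Type u
  | leaf : α → BTree α
  | node : BTree α → BTree α → BTree α

namespace BTree

def leaves {α : Type*} : BTree α → List α
  | leaf a => [a]
  | node l r => l.leaves ++ r.leaves

/-- The cuts of a branch decomposition: for every node of the tree, the set of labels of
leaves below it. -/
def cuts {α : Type*} : BTree α → List (Set α)
  | leaf a => [{a}]
  | node l r => {a | a ∈ l.leaves ∨ a ∈ r.leaves} :: (l.cuts ++ r.cuts)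

def map {α β : Type*} (f : α → β) : BTree α → BTree β
  | leaf a => leaf (f a)
  | node l r => node (l.map f) (r.map f)

end BTree

/-- `T` is a branch decomposition of the whole type `α`: its leaves are in bijection with `α`. -/
def IsBD {α : Type*} (T : BTree α) : Prop := T.leaves.Nodup ∧ ∀ a : α, a ∈ T.leaves

/-- The `ps`-value of a cut `S ⊆ cla(F) ⊕ var(F)` of the formula `F`. -/
noncomputable def psVal {V ι : Type*} (F : ι → Finset (V × Bool)) (S : Set (ι ⊕ V)) : ℕ :=
  max (PSA F {i | Sum.inl i ∉ S} {x | Sum.inr x ∈ S}).ncard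
      (PSA F {i | Sum.inl i ∈ S} {x | Sum.inr x ∉ S}).ncard

/-- The `ps`-width of the formula `F`. -/
noncomputable def psw {V ι : Type*} (F : ι → Finset (V × Bool)) : ℕ :=
  sInf {k | ∃ T : BTree (ι ⊕ V), IsBD T ∧ ∀ S ∈ T.cuts, psVal F S ≤ k}

/-- The MIM-width of a graph. -/
noncomputable def mimw {α : Type*} (G : SimpleGraph α) : ℕ :=
  sInf {k | ∃ T : BTree α, IsBD T ∧
    ∀ S ∈ T.cuts, ∀ M : Finset (α × α), IsIM (bipartize G S) M → M.card ≤ k}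

/-! A clause is satisfied on `X1 ∪ X2` iff it is satisfied on `X1` or on `X2`, so a satisfied
set of `F_v` is the union of those of `F_{c_1}` and `F_{c_2}` under the same assignment, cut down
to the clauses of `F_v`. Conversely, as `X1` and `X2` are disjoint, assignments witnessing the two
children glue into a single one agreeing with each on its own variables. -/

section SatA

variable {V ι : Type*} (F : ι → Finset (V × Bool))

theorem satisfiesOn_union (τ : V → Bool) (C : Finset (V × Bool)) (X Y : Set V) :
    satisfiesOn τ C (X ∪ Y) ↔ satisfiesOn τ C X ∨ satisfiesOn τ C Y := by
  simp only [satisfiesOn, Set.mem_union, or_and_right, and_or_left, exists_or]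

theorem satisfiesOn_congr {τ σ : V → Bool} {X : Set V} (h : Set.EqOn τ σ X)
    (C : Finset (V × Bool)) : satisfiesOn τ C X ↔ satisfiesOn σ C X := by
  unfold satisfiesOn
  exact exists_congr fun l => and_congr_right fun _ => and_congr_right fun hl => by rw [h hl]

theorem satA_congr {τ σ : V → Bool} {X : Set V} (h : Set.EqOn τ σ X) (D : Set ι) :
    satA F τ D X = satA F σ D X := by
  simp only [satA, satisfiesOn_congr h]

theorem satA_union {D D1 D2 : Set ι} (hD1 : D ⊆ D1) (hD2 : D ⊆ D2) (τ : V → Bool)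
    (X1 X2 : Set V) :
    satA F τ D (X1 ∪ X2) = (satA F τ D1 X1 ∪ satA F τ D2 X2) ∩ D := by
  ext i
  simp only [satA, satisfiesOn_union, Set.mem_inter_iff, Set.mem_union, Set.mem_ofPred_eq]
  constructor
  · rintro ⟨hi, h | h⟩
    exacts [⟨Or.inl ⟨hD1 hi, h⟩, hi⟩, ⟨Or.inr ⟨hD2 hi, h⟩, hi⟩]
  · rintro ⟨⟨-, h⟩ | ⟨-, h⟩, hi⟩
    exacts [⟨hi, Or.inl h⟩, ⟨hi, Or.inr h⟩]

end SatA

theorem stmt5_general {V ι : Type*} (F : ι → Finset (V × Bool)) (X1 X2 : Set V)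
    (C1 C2 : Set ι) (hX : Disjoint X1 X2) :
    PSA F (C1 ∪ C2)ᶜ (X1 ∪ X2) =
      {s : Set ι | ∃ s1 ∈ PSA F C1ᶜ X1, ∃ s2 ∈ PSA F C2ᶜ X2,
        s = (s1 ∪ s2) ∩ (C1 ∪ C2)ᶜ} := by
  classical
  have hD1 : (C1 ∪ C2)ᶜ ⊆ C1ᶜ := Set.compl_subset_compl.mpr Set.subset_union_left
  have hD2 : (C1 ∪ C2)ᶜ ⊆ C2ᶜ := Set.compl_subset_compl.mpr Set.subset_union_right
  ext s
  constructor
  · rintro ⟨τ, rfl⟩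
    exact ⟨_, ⟨τ, rfl⟩, _, ⟨τ, rfl⟩, satA_union F hD1 hD2 τ X1 X2⟩
  · rintro ⟨s1, ⟨τ1, rfl⟩, s2, ⟨τ2, rfl⟩, rfl⟩
    refine ⟨X1.piecewise τ1 τ2, ?_⟩
    rw [satA_union F hD1 hD2, satA_congr F (X1.piecewise_eqOn τ1 τ2),
      satA_congr F ((X1.piecewise_eqOn_compl τ1 τ2).mono hX.subset_compl_left)]

/-- `PS(F_v) = { (C_1 ∪ C_2) ∩ cla(F_v) : C_1 ∈ PS(F_{c_1}), C_2 ∈ PS(F_{c_2}) }`. -/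
theorem stmt5 {V ι : Type*} (F : ι → Finset (V × Bool)) (X1 X2 : Set V)
    (C1 C2 : Set ι) (hX : Disjoint X1 X2) (hC : Disjoint C1 C2) :
    PSA F (C1 ∪ C2)ᶜ (X1 ∪ X2) =
      {s : Set ι | ∃ s1 ∈ PSA F C1ᶜ X1, ∃ s2 ∈ PSA F C2ᶜ X2,
        s = (s1 ∪ s2) ∩ (C1 ∪ C2)ᶜ} :=
  stmt5_general F X1 X2 C1 C2 hX
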